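/- Let A be a nonempty finite alphabet and μ a probability distribution on A. For n > 1 let L_n = (1/n) Σ_{u : Fin n → A} μ^n(u) · (1/|S_u|) Σ_i i · α_i(|S_u|) · 2^i be the expected number of secret bits per covertext letter transmitted by the stegosystem St_n(A), where |S_u| = n!/∏_{a∈A} ν_u(a)! and α_i(N) are the binary digits of N. Then L_n → h(μ) as n → ∞, where h(μ) = − Σ_{a∈A} μ(a) log₂ μ(a) is the Shannon entropy of μ. -/

import Mathlib

/-- ν_u(a): the number of occurrences of the letter `a` in the word `u`. -/
def freq {A : Type*} [DecidableEq A] {n : ℕ} (u : Fin n → A) (a : A) : ℕ :=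
  (Finset.univ.filter fun i => u i = a).card

/-- |S_u| = n! / ∏ₐ ν_u(a)! : the size of the type class of `u`. -/
def typeClassCard {A : Type*} [Fintype A] [DecidableEq A] {n : ℕ} (u : Fin n → A) : ℕ :=
  n.factorial / ∏ a : A, (freq u a).factorial

/-- α_i(N): the i-th binary digit of `N`. -/
def binDigit (N i : ℕ) : ℕ := N / 2 ^ i % 2

/-- E(N) = (1/N) Σ_i i · α_i(N) · 2^i : the expected number of secret bits encoded
into one covertext block whose type class has size `N`. -/
noncomputable def expBits (N : ℕ) : ℝ :=
  (1 / (N : ℝ)) * ∑ i ∈ Finset.range (Nat.log 2 N + 1), (i : ℝ) * (binDigit N i : ℝ) * 2 ^ i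

/-- L_n: the expected number of secret bits per covertext letter transmitted by
the stegosystem St_n(A). -/
noncomputable def rateL (A : Type*) [Fintype A] [DecidableEq A] (μ : PMF A) (n : ℕ) : ℝ :=
  (1 / (n : ℝ)) * ∑ u : Fin n → A, (∏ i, (μ (u i)).toReal) * expBits (typeClassCard u)

/-!
By orbit–stabilizer for permutations of positions, `|S_u| = n! / ∏ₐ ν_u(a)!` is the number
of words with the same letter counts as `u`. Write `P(u) = ∏ᵢ μ(uᵢ)`. Since `P` is constant
on `S_u`, `|S_u| · P(u) = μⁿ(S_u) ≤ 1`, so `𝔼 log |S_u| ≤ 𝔼 [-log P] = n h(μ)`. Conversely,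
`𝔼 [-log (|S_u| · P(u))]` is the entropy of the letter counts of a random word, hence at most
the logarithm of the number of possible counts, `|A| log (n + 1)`. The expected number of bits
`E(N)` extracted from a block of `N` equiprobable values lies within `3` of `log₂ N`, so
`L_n = h(μ) + O(log n / n)`.
-/

open Finset Real Filter Topology

section Words

variable {A : Type*} {n : ℕ}

def wordProb (p : A → ℝ) (u : Fin n → A) : ℝ := ∏ i, p (u i)

variable {p : A → ℝ}

lemma wordProb_nonneg (hp : ∀ a, 0 ≤ p a) (u : Fin n → A) : 0 ≤ wordProb p u :=
  prod_nonneg fun i _ => hp (u i)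

variable [Fintype A]

lemma sum_wordProb (p : A → ℝ) : ∑ u : Fin n → A, wordProb p u = (∑ a, p a) ^ n := by
  simp only [wordProb, ← Fintype.prod_sum, prod_const, card_univ, Fintype.card_fin]

lemma sum_wordProb_mul_apply (hp : ∑ a, p a = 1) (f : A → ℝ) (j : Fin n) :
    ∑ u : Fin n → A, wordProb p u * f (u j) = ∑ a, p a * f a := by
  set g : Fin n → A → ℝ := Function.update (fun _ => p) j fun a => p a * f a
  have hg : ∀ i ∈ univ.erase j, g i = p := fun i hi =>
    Function.update_of_ne (ne_of_mem_erase hi) _ _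
  have hsplit : ∀ u : Fin n → A, wordProb p u * f (u j) = ∏ i, g i (u i) := by
    intro u
    rw [wordProb, ← mul_prod_erase univ _ (mem_univ j), ← mul_prod_erase univ _ (mem_univ j),
      prod_congr rfl fun i hi => congrFun (hg i hi) (u i)]
    simp only [g, Function.update_self]
    ring
  rw [sum_congr rfl fun u _ => hsplit u, ← Fintype.prod_sum,
    ← mul_prod_erase univ _ (mem_univ j), prod_congr rfl fun i hi => by rw [hg i hi, hp]]
  simp [g]

lemma sum_wordProb_mul_sum (hp : ∑ a, p a = 1) (f : A → ℝ) :
    ∑ u : Fin n → A, wordProb p u * ∑ i, f (u i) = n * ∑ a, p a * f a :=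
  calc ∑ u : Fin n → A, wordProb p u * ∑ i, f (u i)
      = ∑ i, ∑ u : Fin n → A, wordProb p u * f (u i) := by simp only [mul_sum]; exact sum_comm
    _ = n * ∑ a, p a * f a := by simp [sum_wordProb_mul_apply hp]

lemma sum_negMulLog_wordProb (hp : ∑ a, p a = 1) :
    ∑ u : Fin n → A, negMulLog (wordProb p u) = n * ∑ a, negMulLog (p a) := by
  have hterm : ∀ u : Fin n → A,
      negMulLog (wordProb p u) = wordProb p u * ∑ i, -log (p (u i)) := by
    intro u
    by_cases hu : wordProb p u = 0
    · simp [hu]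
    · rw [negMulLog, wordProb, log_prod fun i _ => ?_, sum_neg_distrib]
      · ring
      · exact fun h => hu (prod_eq_zero (mem_univ i) h)
  rw [sum_congr rfl fun u _ => hterm u, sum_wordProb_mul_sum hp fun a => -log (p a)]
  simp only [negMulLog, neg_mul, mul_neg]

lemma neg_sum_mul_logb_two (p : A → ℝ) :
    -∑ a, p a * logb 2 (p a) = (∑ a, negMulLog (p a)) / log 2 := by
  simp only [negMulLog, logb, sum_div, ← sum_neg_distrib]
  exact sum_congr rfl fun a _ => by ring

lemma PMF.sum_toReal (μ : PMF A) : ∑ a, (μ a).toReal = 1 := by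
  rw [← ENNReal.toReal_sum fun a _ => μ.apply_ne_top a, ← tsum_fintype (L := .unconditional _),
    μ.tsum_coe, ENNReal.toReal_one]

end Words

section Freq

variable {A : Type*} [DecidableEq A] {n : ℕ}

lemma freq_eq_card_subtype (u : Fin n → A) (a : A) : freq u a = Fintype.card {i // u i = a} := by
  rw [freq, Fintype.card_subtype]

lemma freq_le (u : Fin n → A) (a : A) : freq u a ≤ n :=
  (card_filter_le _ _).trans_eq (card_fin n)

lemma freq_comp_perm (u : Fin n → A) (σ : Equiv.Perm (Fin n)) : freq (u ∘ σ) = freq u := by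
  ext a
  simp only [freq_eq_card_subtype]
  exact Fintype.card_congr (σ.subtypeEquiv fun _ => Iff.rfl)

lemma exists_perm_comp_eq_of_freq_eq {u v : Fin n → A} (h : freq v = freq u) :
    ∃ σ : Equiv.Perm (Fin n), u ∘ σ = v := by
  refine ⟨Equiv.ofFiberEquiv fun a => Fintype.equivOfCardEq ?_,
    funext fun i => Equiv.ofFiberEquiv_map _ i⟩
  rw [← freq_eq_card_subtype, ← freq_eq_card_subtype, h]

variable [Fintype A]

lemma wordProb_eq_prod_pow (p : A → ℝ) (u : Fin n → A) :
    wordProb p u = ∏ a, p a ^ freq u a := by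
  rw [wordProb, prod_comp]
  exact prod_subset (subset_univ _) fun a _ ha => by
    rw [filter_eq_empty_iff.mpr fun i _ hi => ha (mem_image.mpr ⟨i, mem_univ i, hi⟩),
      card_empty, pow_zero]

lemma wordProb_congr_freq {p : A → ℝ} {u v : Fin n → A} (h : freq v = freq u) :
    wordProb p v = wordProb p u := by
  rw [wordProb_eq_prod_pow, wordProb_eq_prod_pow, h]

end Freq

section TypeClass

variable {A : Type*} [Fintype A] [DecidableEq A] {n : ℕ}

def typeClass (u : Fin n → A) : Finset (Fin n → A) := {v | freq v = freq u}

lemma mem_typeClass {u v : Fin n → A} : v ∈ typeClass u ↔ freq v = freq u := by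
  simp [typeClass]

open MulAction in
lemma card_typeClass_mul_prod_factorial (u : Fin n → A) :
    #(typeClass u) * ∏ a, (freq u a).factorial = n.factorial := by
  have horbit : orbit (Equiv.Perm (Fin n))ᵈᵐᵃ u = ↑(typeClass u) := by
    ext v
    rw [mem_orbit_iff, mem_coe, mem_typeClass]
    constructor
    · rintro ⟨g, rfl⟩
      exact freq_comp_perm u _
    · intro h
      obtain ⟨σ, rfl⟩ := exists_perm_comp_eq_of_freq_eq h
      exact ⟨DomMulAct.mk σ, rfl⟩
  have hstab :
      Nat.card (stabilizer (Equiv.Perm (Fin n))ᵈᵐᵃ u) = ∏ a, (freq u a).factorial := by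
    simp only [freq_eq_card_subtype]
    rw [← DomMulAct.stabilizer_card, ← Nat.card_eq_fintype_card]
    exact Nat.card_congr (Equiv.subtypeEquiv DomMulAct.mk.symm fun _ =>
      DomMulAct.mem_stabilizer_iff)
  have := Nat.card_congr (orbitProdStabilizerEquivGroup (Equiv.Perm (Fin n))ᵈᵐᵃ u)
  rw [Nat.card_prod, hstab, horbit, Nat.card_coe_set_eq, Set.ncard_coe_finset] at this
  rw [this, Nat.card_congr DomMulAct.mk.symm, Nat.card_perm, Nat.card_eq_fintype_card,
    Fintype.card_fin]

lemma typeClassCard_eq_card (u : Fin n → A) : typeClassCard u = #(typeClass u) := by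
  rw [typeClassCard, ← card_typeClass_mul_prod_factorial u,
    Nat.mul_div_cancel _ (prod_pos fun a _ => (freq u a).factorial_pos)]

lemma typeClassCard_pos (u : Fin n → A) : 0 < typeClassCard u := by
  rw [typeClassCard_eq_card]
  exact card_pos.mpr ⟨u, mem_typeClass.mpr rfl⟩

lemma sum_inv_typeClassCard :
    ∑ u : Fin n → A, (typeClassCard u : ℝ)⁻¹ =
      #(univ.image (freq : (Fin n → A) → A → ℕ)) := by
  rw [← sum_fiberwise_of_maps_to (g := freq) fun u _ => mem_image_of_mem _ (mem_univ u),
    card_eq_sum_ones, Nat.cast_sum]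
  refine sum_congr rfl fun k hk => ?_
  obtain ⟨u, -, rfl⟩ := mem_image.mp hk
  have hcard : ∀ v ∈ ({v | freq v = freq u} : Finset (Fin n → A)),
      typeClassCard v = #(typeClass u) := by
    intro v hv
    rw [typeClassCard_eq_card, typeClass, (mem_filter.mp hv).2]
    rfl
  rw [sum_congr rfl fun v hv => by rw [hcard v hv], sum_const, nsmul_eq_mul, Nat.cast_one]
  exact mul_inv_cancel₀ (Nat.cast_ne_zero.mpr (card_pos.mpr ⟨u, mem_typeClass.mpr rfl⟩).ne')

lemma card_image_freq_le :
    #(univ.image (freq : (Fin n → A) → A → ℕ)) ≤ (n + 1) ^ Fintype.card A := by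
  calc #(univ.image (freq : (Fin n → A) → A → ℕ))
      ≤ #(Fintype.piFinset fun _ : A => range (n + 1)) := by
        refine card_le_card fun k hk => ?_
        obtain ⟨u, -, rfl⟩ := mem_image.mp hk
        exact Fintype.mem_piFinset.mpr fun a => mem_range.mpr (Nat.lt_succ_of_le (freq_le u a))
    _ = (n + 1) ^ Fintype.card A := by simp

lemma typeClassCard_mul_wordProb_le_one {p : A → ℝ} (hp0 : ∀ a, 0 ≤ p a)
    (hp1 : ∑ a, p a = 1) (u : Fin n → A) : typeClassCard u * wordProb p u ≤ 1 :=
  calc (typeClassCard u : ℝ) * wordProb p u = ∑ v ∈ typeClass u, wordProb p v := by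
        rw [sum_congr rfl fun v hv => wordProb_congr_freq (mem_typeClass.mp hv), sum_const,
          nsmul_eq_mul, typeClassCard_eq_card]
    _ ≤ ∑ v, wordProb p v :=
        sum_le_sum_of_subset_of_nonneg (subset_univ _) fun v _ _ => wordProb_nonneg hp0 v
    _ = 1 := by rw [sum_wordProb, hp1, one_pow]

end TypeClass

section Entropy

variable {A : Type*} [Fintype A] [DecidableEq A] {n : ℕ} {p : A → ℝ}

lemma sum_wordProb_mul_log_typeClassCard_le (hp0 : ∀ a, 0 ≤ p a) (hp1 : ∑ a, p a = 1) :
    ∑ u : Fin n → A, wordProb p u * log (typeClassCard u) ≤ n * ∑ a, negMulLog (p a) := by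
  rw [← sum_negMulLog_wordProb hp1]
  refine sum_le_sum fun u _ => ?_
  rcases (wordProb_nonneg hp0 u).eq_or_lt with h | h
  · simp [← h]
  · rw [negMulLog, neg_mul, ← mul_neg, ← log_inv]
    refine mul_le_mul_of_nonneg_left (log_le_log (by exact_mod_cast typeClassCard_pos u) ?_) h.le
    rw [← one_div, le_div_iff₀ h]
    exact typeClassCard_mul_wordProb_le_one hp0 hp1 u

lemma sub_le_sum_wordProb_mul_log_typeClassCard (hp0 : ∀ a, 0 ≤ p a) (hp1 : ∑ a, p a = 1) :
    n * ∑ a, negMulLog (p a) - Fintype.card A * log (n + 1) ≤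
      ∑ u : Fin n → A, wordProb p u * log (typeClassCard u) := by
  set s : Finset (Fin n → A) := {u | wordProb p u ≠ 0}
  have hpos : ∀ u ∈ s, 0 < wordProb p u := fun u hu =>
    (wordProb_nonneg hp0 u).lt_of_ne' (mem_filter.mp hu).2
  have hS : ∀ u : Fin n → A, (0 : ℝ) < typeClassCard u := fun u => by
    exact_mod_cast typeClassCard_pos u
  have hgap :
      n * ∑ a, negMulLog (p a) - ∑ u : Fin n → A, wordProb p u * log (typeClassCard u) =
      ∑ u ∈ s, wordProb p u * log (typeClassCard u * wordProb p u)⁻¹ := by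
    rw [← sum_negMulLog_wordProb hp1, ← sum_sub_distrib,
      ← sum_filter_of_ne (p := fun u : Fin n → A => wordProb p u ≠ 0) fun u _ hu h => hu ?_]
    · refine sum_congr rfl fun u hu => ?_
      rw [log_inv, log_mul (hS u).ne' (hpos u hu).ne', negMulLog]
      ring
    · simp [h]
  have hw1 : ∑ u ∈ s, wordProb p u = 1 := by rw [sum_filter_ne_zero, sum_wordProb, hp1, one_pow]
  have hjensen := strictConcaveOn_log_Ioi.concaveOn.le_map_sum (t := s) (w := wordProb p)
    (p := fun u => (typeClassCard u * wordProb p u)⁻¹) (fun u hu => (hpos u hu).le) hw1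
    (fun u hu => inv_pos.mpr (mul_pos (hS u) (hpos u hu)))
  simp only [smul_eq_mul] at hjensen
  have hsum : ∑ u ∈ s, wordProb p u * (typeClassCard u * wordProb p u : ℝ)⁻¹ ≤
      ((n + 1) ^ Fintype.card A : ℕ) :=
    calc ∑ u ∈ s, wordProb p u * (typeClassCard u * wordProb p u : ℝ)⁻¹
        = ∑ u ∈ s, (typeClassCard u : ℝ)⁻¹ := sum_congr rfl fun u hu => by
          rw [mul_inv, mul_left_comm, mul_inv_cancel₀ (hpos u hu).ne', mul_one]
      _ ≤ ∑ u : Fin n → A, (typeClassCard u : ℝ)⁻¹ :=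
          sum_le_sum_of_subset_of_nonneg (subset_univ _) fun u _ _ => (inv_pos.mpr (hS u)).le
      _ ≤ ((n + 1) ^ Fintype.card A : ℕ) := by
          rw [sum_inv_typeClassCard]
          exact_mod_cast card_image_freq_le
  obtain ⟨u₀, hu₀, -⟩ := exists_ne_zero_of_sum_ne_zero (hw1.trans_ne one_ne_zero)
  have hlog := log_le_log (sum_pos (fun u hu => mul_pos (hpos u hu)
    (inv_pos.mpr (mul_pos (hS u) (hpos u hu)))) ⟨u₀, hu₀⟩) hsum
  push_cast at hlog
  rw [log_pow] at hlog
  linarith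

end Entropy

section BinaryDigits

lemma sum_binDigit_mul_pow (N k : ℕ) : ∑ i ∈ range k, binDigit N i * 2 ^ i = N % 2 ^ k := by
  induction k with
  | zero => simp [Nat.mod_one]
  | succ k ih => rw [sum_range_succ, ih, Nat.mod_pow_succ, binDigit]; ring

lemma sum_binDigit_mul_pow_log (N : ℕ) :
    ∑ i ∈ range (Nat.log 2 N + 1), (binDigit N i : ℝ) * 2 ^ i = N := by
  have h := (sum_binDigit_mul_pow N _).trans
    (Nat.mod_eq_of_lt (Nat.lt_pow_succ_log_self one_lt_two N))
  exact_mod_cast h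

lemma binDigit_le_one (N i : ℕ) : binDigit N i ≤ 1 :=
  Nat.lt_succ_iff.mp (Nat.mod_lt _ two_pos)

lemma sum_range_sub_mul_two_pow (L : ℕ) :
    ∑ i ∈ range (L + 1), ((L : ℝ) - i) * 2 ^ i = 2 ^ (L + 1) - (L + 2) := by
  induction L with
  | zero => norm_num
  | succ L ih =>
    rw [sum_range_succ]
    have hsplit : ∀ i ∈ range (L + 1),
        ((L + 1 : ℕ) - (i : ℝ)) * 2 ^ i = (L - i) * 2 ^ i + 2 ^ i := fun i _ => by
      push_cast; ring
    rw [sum_congr rfl hsplit, sum_add_distrib, ih, geom_sum_eq (by norm_num)]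
    push_cast
    ring

lemma expBits_le_natLog (N : ℕ) : expBits N ≤ Nat.log 2 N := by
  rw [expBits, one_div_mul_eq_div]
  refine div_le_of_le_mul₀ N.cast_nonneg (Nat.cast_nonneg _) ?_
  calc ∑ i ∈ range (Nat.log 2 N + 1), (i : ℝ) * binDigit N i * 2 ^ i
      ≤ ∑ i ∈ range (Nat.log 2 N + 1), (Nat.log 2 N : ℝ) * (binDigit N i * 2 ^ i) := by
        refine sum_le_sum fun i hi => ?_
        rw [mul_assoc]
        gcongr
        exact_mod_cast Nat.lt_succ_iff.mp (mem_range.mp hi)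
    _ = Nat.log 2 N * N := by rw [← mul_sum, sum_binDigit_mul_pow_log]

lemma natLog_sub_two_le_expBits {N : ℕ} (hN : 0 < N) : (Nat.log 2 N : ℝ) - 2 ≤ expBits N := by
  set L := Nat.log 2 N
  have hN' : (0 : ℝ) < N := by exact_mod_cast hN
  have hpow : (2 : ℝ) ^ (L + 1) ≤ 2 * N := by
    rw [pow_succ, mul_comm]
    gcongr
    exact_mod_cast Nat.pow_log_le_self 2 hN.ne'
  have hterm : ∀ i ∈ range (L + 1),
      L * ((binDigit N i : ℝ) * 2 ^ i) - (L - i) * 2 ^ i ≤ i * binDigit N i * 2 ^ i := by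
    intro i hi
    have hiL : (i : ℝ) ≤ L := by exact_mod_cast Nat.lt_succ_iff.mp (mem_range.mp hi)
    have hα : (binDigit N i : ℝ) ≤ 1 := by exact_mod_cast binDigit_le_one N i
    nlinarith [mul_nonneg (mul_nonneg (sub_nonneg.mpr hiL) (sub_nonneg.mpr hα))
      (pow_pos (two_pos : (0 : ℝ) < 2) i).le]
  have hsum := sum_le_sum hterm
  rw [sum_sub_distrib, ← mul_sum, sum_binDigit_mul_pow_log, sum_range_sub_mul_two_pow] at hsum
  rw [expBits, one_div_mul_eq_div, le_div_iff₀ hN']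
  nlinarith

lemma expBits_le_logb (N : ℕ) : expBits N ≤ logb 2 N :=
  (expBits_le_natLog N).trans (by exact_mod_cast natLog_le_logb N 2)

lemma logb_sub_three_le_expBits {N : ℕ} (hN : 0 < N) : logb 2 N - 3 ≤ expBits N := by
  have hfloor := Nat.lt_floor_add_one (logb 2 N)
  rw [show (2 : ℝ) = (2 : ℕ) by norm_num, natFloor_logb_natCast] at hfloor
  push_cast at hfloor
  linarith [natLog_sub_two_le_expBits hN]

end BinaryDigits

section Rate

variable {A : Type*} [Fintype A] [DecidableEq A] {n : ℕ} {p : A → ℝ}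

lemma sum_wordProb_mul_expBits_le (hp0 : ∀ a, 0 ≤ p a) :
    ∑ u : Fin n → A, wordProb p u * expBits (typeClassCard u) ≤
      (∑ u : Fin n → A, wordProb p u * log (typeClassCard u)) / log 2 := by
  rw [sum_div]
  refine sum_le_sum fun u _ => ?_
  rw [mul_div_assoc, ← logb]
  exact mul_le_mul_of_nonneg_left (expBits_le_logb _) (wordProb_nonneg hp0 u)

lemma sum_wordProb_mul_expBits_ge (hp0 : ∀ a, 0 ≤ p a) (hp1 : ∑ a, p a = 1) :
    (∑ u : Fin n → A, wordProb p u * log (typeClassCard u)) / log 2 - 3 ≤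
      ∑ u : Fin n → A, wordProb p u * expBits (typeClassCard u) := by
  have hsum : (∑ u : Fin n → A, wordProb p u * log (typeClassCard u)) / log 2 - 3 =
      ∑ u : Fin n → A, wordProb p u * (logb 2 (typeClassCard u) - 3) := by
    simp only [mul_sub, sum_sub_distrib, ← sum_mul, sum_wordProb, hp1, one_pow, one_mul, sum_div,
      logb, mul_div_assoc]
  rw [hsum]
  exact sum_le_sum fun u _ => mul_le_mul_of_nonneg_left
    (logb_sub_three_le_expBits (typeClassCard_pos u)) (wordProb_nonneg hp0 u)

lemma rateL_eq (μ : PMF A) (n : ℕ) :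
    rateL A μ n = (∑ u : Fin n → A,
      wordProb (fun a => (μ a).toReal) u * expBits (typeClassCard u)) / n := by
  rw [rateL, one_div_mul_eq_div]
  rfl

lemma rateL_le_entropy (μ : PMF A) (hn : 0 < n) :
    rateL A μ n ≤ -∑ a, (μ a).toReal * logb 2 (μ a).toReal := by
  have hp0 : ∀ a, 0 ≤ (μ a).toReal := fun a => ENNReal.toReal_nonneg
  have hupper := (sum_wordProb_mul_expBits_le (n := n) hp0).trans
    (div_le_div_of_nonneg_right (sum_wordProb_mul_log_typeClassCard_le hp0 μ.sum_toReal)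
      (log_pos one_lt_two).le)
  rw [rateL_eq, div_le_iff₀ (by exact_mod_cast hn), neg_sum_mul_logb_two]
  set H := ∑ a, negMulLog (μ a).toReal
  have hcomm : n * H / log 2 = H / log 2 * n := by ring
  linarith

lemma entropy_sub_le_rateL (μ : PMF A) (hn : 0 < n) :
    -∑ a, (μ a).toReal * logb 2 (μ a).toReal - (Fintype.card A * logb 2 (n + 1) + 3) / n ≤
      rateL A μ n := by
  have hp0 : ∀ a, 0 ≤ (μ a).toReal := fun a => ENNReal.toReal_nonneg
  have hn' : (0 : ℝ) < n := by exact_mod_cast hn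
  have hX := sum_wordProb_mul_expBits_ge (n := n) hp0 μ.sum_toReal
  have hE := div_le_div_of_nonneg_right
    (sub_le_sum_wordProb_mul_log_typeClassCard (n := n) hp0 μ.sum_toReal) (log_pos one_lt_two).le
  rw [rateL_eq, le_div_iff₀ hn', neg_sum_mul_logb_two]
  set H := ∑ a, negMulLog (μ a).toReal
  have hlhs : (H / log 2 - (Fintype.card A * logb 2 (n + 1) + 3) / n) * n =
      (n * H - Fintype.card A * log (n + 1)) / log 2 - 3 := by
    rw [logb]
    field_simp
    ring
  linarith

end Rate

lemma tendsto_logb_natCast_add_one_div_atTop (b : ℝ) :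
    Tendsto (fun n : ℕ => logb b (n + 1) / n) atTop (𝓝 0) := by
  have h := (tendsto_pow_logb_div_mul_add_atTop (b := b) 1 (-1) 1 one_ne_zero).comp
    (tendsto_atTop_add_const_right atTop 1 tendsto_natCast_atTop_atTop)
  refine h.congr fun n => ?_
  simp

theorem stmt13_general (A : Type*) [Fintype A] [DecidableEq A] (μ : PMF A) :
    Filter.Tendsto (fun n : ℕ => rateL A μ n) Filter.atTop
      (nhds (-∑ a : A, (μ a).toReal * Real.logb 2 (μ a).toReal)) := by
  have hgap :
      Tendsto (fun n : ℕ => (Fintype.card A * logb 2 (n + 1) + 3) / n) atTop (𝓝 0) := by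
    simpa [add_div, mul_div_assoc] using
      ((tendsto_logb_natCast_add_one_div_atTop 2).const_mul _).add
        (tendsto_const_div_atTop_nhds_zero_nat 3)
  refine tendsto_of_tendsto_of_tendsto_of_le_of_le' (by simpa using tendsto_const_nhds.sub hgap)
    tendsto_const_nhds ?_ ?_
  · filter_upwards [eventually_gt_atTop 0] with n hn using entropy_sub_le_rateL μ hn
  · filter_upwards [eventually_gt_atTop 0] with n hn using rateL_le_entropy μ hn

theorem stmt13 (A : Type*) [Fintype A] [Nonempty A] [DecidableEq A] (μ : PMF A) :
    Filter.Tendsto (fun n : ℕ => rateL A μ n) Filter.atTop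
      (nhds (-∑ a : A, (μ a).toReal * Real.logb 2 (μ a).toReal)) :=
  stmt13_general A μ
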